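/- arXiv:1110.0215 — 2 statements merged into one kernel-verified Lean document; each statement's English description precedes it below -/
import Mathlib

section
/- Fix h₁ > h₂ > 0 and P > 0. For P₁ ∈ [0, P], define g(P₁), r₁(P₁), r₂(P₁) as before and 1/a(P₁) = r₂(P₁)/g(P₁) + r₁(P₁). Then the derivative of 1/a with respect to P₁ equals −(h₁² − h₂²)·h₁²·h₂²/(h₂² + h₁²h₂²P₁)² · (γ(h₂²P) − γ(h₂²P₁)), which is nonpositive on [0, P]; hence 1/a is monotonically decreasing on [0, P] with minimum value γ(h₁²P) at P₁ = P. -/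
noncomputable def gam (x : ℝ) : ℝ := (1/2) * Real.logb 2 (1 + x)

/-!
Write `A = h₁²`, `B = h₂²`, so that `1/g = (1/B + s)/(1/A + s)`. Differentiating `r₂/g + r₁`, the
terms coming from the logarithms cancel exactly, because `B (1/B + s)/(1 + B s) = 1 = A (1/A + s)/(1 + A s)`.
What is left is `r₂` times the derivative of `1/g`, that is `-(A - B) A / (B (1 + A s)²) · r₂`, which is
`≤ 0` on `[0, P]` since `A ≥ B` and `r₂ ≥ 0` there. Hence `1/a` is antitone on `[0, P]`, and at `P`
it equals `r₁(P) = γ(A P)` because `r₂(P) = 0`.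
-/

open Real Set

theorem hasDerivAt_gam_const_mul (c : ℝ) {t : ℝ} (ht : 1 + c * t ≠ 0) :
    HasDerivAt (fun s => gam (c * s)) (c / (2 * log 2 * (1 + c * t))) t := by
  have hlog : HasDerivAt (fun s => log (1 + c * s)) (c / (1 + c * t)) t := by
    simpa using (((hasDerivAt_id t).const_mul c).const_add 1).log ht
  refine ((hlog.div_const (log 2)).const_mul (1 / 2)).congr_deriv ?_
  field_simp

theorem gam_le_gam {a b : ℝ} (ha : -1 < a) (hab : a ≤ b) : gam a ≤ gam b := by
  unfold gam
  gcongr <;> linarith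

/-- `1/a = r₂/g + r₁` at `P₁ = s`, with `A = h₁²`, `B = h₂²`. -/
noncomputable def invTangentCoeff (A B P s : ℝ) : ℝ :=
  (gam (B * P) - gam (B * s)) / ((1 / A + s) / (1 / B + s)) + gam (A * s)

theorem hasDerivAt_invTangentCoeff {A B : ℝ} (P : ℝ) {t : ℝ} (hA : A ≠ 0) (hB : B ≠ 0)
    (hAt : 1 + A * t ≠ 0) (hBt : 1 + B * t ≠ 0) :
    HasDerivAt (invTangentCoeff A B P)
      (-((A - B) * A * B / (B + A * B * t) ^ 2) * (gam (B * P) - gam (B * t))) t := by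
  have hAt' : 1 / A + t ≠ 0 := by
    rw [div_add' _ _ _ hA]; exact div_ne_zero (by rwa [mul_comm]) hA
  have hform : invTangentCoeff A B P =
      fun s => (gam (B * P) - gam (B * s)) * (1 / B + s) / (1 / A + s) + gam (A * s) := by
    funext s; rw [invTangentCoeff, div_div_eq_mul_div]
  rw [hform]
  have hsum := ((((hasDerivAt_const t (gam (B * P))).sub (hasDerivAt_gam_const_mul B hBt)).mul
    ((hasDerivAt_id t).const_add (1 / B))).div ((hasDerivAt_id t).const_add (1 / A)) hAt').add
    (hasDerivAt_gam_const_mul A hAt)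
  refine hsum.congr_deriv ?_
  have hlog2 : log 2 ≠ 0 := by positivity
  rw [show B + A * B * t = B * (1 + A * t) by ring]
  simp only [Pi.sub_apply, Pi.mul_apply, id]
  field_simp
  ring

theorem invTangentCoeff_self (A B P : ℝ) : invTangentCoeff A B P P = gam (A * P) := by
  simp [invTangentCoeff]

section Monotone

variable {A B P : ℝ} (hB : 0 < B) (hBA : B ≤ A)
include hB hBA

theorem hasDerivAt_invTangentCoeff_of_nonneg {t : ℝ} (ht : 0 ≤ t) :
    HasDerivAt (invTangentCoeff A B P)
      (-((A - B) * A * B / (B + A * B * t) ^ 2) * (gam (B * P) - gam (B * t))) t := by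
  have hA : 0 < A := hB.trans_le hBA
  exact hasDerivAt_invTangentCoeff P hA.ne' hB.ne' (by positivity) (by positivity)

theorem deriv_invTangentCoeff_nonpos {t : ℝ} (ht : t ∈ Icc 0 P) :
    deriv (invTangentCoeff A B P) t ≤ 0 := by
  rw [(hasDerivAt_invTangentCoeff_of_nonneg hB hBA ht.1).deriv, neg_mul, neg_nonpos]
  have hA : 0 < A := hB.trans_le hBA
  have hrate : gam (B * t) ≤ gam (B * P) :=
    gam_le_gam (by linarith [mul_nonneg hB.le ht.1]) (mul_le_mul_of_nonneg_left ht.2 hB.le)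
  have hcoeff : 0 ≤ (A - B) * A * B / (B + A * B * t) ^ 2 := by
    have : 0 ≤ A - B := sub_nonneg.2 hBA
    positivity
  exact mul_nonneg hcoeff (sub_nonneg.2 hrate)

theorem invTangentCoeff_antitoneOn : AntitoneOn (invTangentCoeff A B P) (Icc 0 P) := by
  have hderiv {t : ℝ} (ht : t ∈ Icc 0 P) :=
    hasDerivAt_invTangentCoeff_of_nonneg (P := P) hB hBA ht.1
  refine antitoneOn_of_deriv_nonpos (convex_Icc 0 P)
    (fun t ht => (hderiv ht).continuousAt.continuousWithinAt)
    (fun t ht => (hderiv (interior_subset ht)).differentiableAt.differentiableWithinAt)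
    (fun t ht => deriv_invTangentCoeff_nonpos hB hBA (interior_subset ht))

end Monotone

theorem one_over_a_decreasing_general (h₁ h₂ P : ℝ)
    (hh₂ : 0 < h₂) (hh : h₂ < h₁) :
    (∀ t ∈ Set.Icc (0 : ℝ) P,
        deriv (fun s : ℝ =>
            (gam (h₂^2 * P) - gam (h₂^2 * s)) / ((1 / h₁^2 + s) / (1 / h₂^2 + s)) +
              gam (h₁^2 * s)) t
          = -((h₁^2 - h₂^2) * h₁^2 * h₂^2 / (h₂^2 + h₁^2 * h₂^2 * t)^2) *
              (gam (h₂^2 * P) - gam (h₂^2 * t)) ∧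
        deriv (fun s : ℝ =>
            (gam (h₂^2 * P) - gam (h₂^2 * s)) / ((1 / h₁^2 + s) / (1 / h₂^2 + s)) +
              gam (h₁^2 * s)) t ≤ 0) ∧
    AntitoneOn (fun s : ℝ =>
        (gam (h₂^2 * P) - gam (h₂^2 * s)) / ((1 / h₁^2 + s) / (1 / h₂^2 + s)) +
          gam (h₁^2 * s)) (Set.Icc 0 P) ∧
    ((gam (h₂^2 * P) - gam (h₂^2 * P)) / ((1 / h₁^2 + P) / (1 / h₂^2 + P)) +
        gam (h₁^2 * P) = gam (h₁^2 * P)) ∧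
    (∀ t ∈ Set.Icc (0 : ℝ) P,
      gam (h₁^2 * P) ≤
        (gam (h₂^2 * P) - gam (h₂^2 * t)) / ((1 / h₁^2 + t) / (1 / h₂^2 + t)) +
          gam (h₁^2 * t)) := by
  have hB : 0 < h₂ ^ 2 := by positivity
  have hBA : h₂ ^ 2 ≤ h₁ ^ 2 := by gcongr
  have hanti : AntitoneOn (invTangentCoeff (h₁ ^ 2) (h₂ ^ 2) P) (Icc 0 P) :=
    invTangentCoeff_antitoneOn hB hBA
  refine ⟨fun t ht => ⟨(hasDerivAt_invTangentCoeff_of_nonneg hB hBA ht.1).deriv,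
    deriv_invTangentCoeff_nonpos hB hBA ht⟩, hanti, invTangentCoeff_self _ _ P, fun t ht => ?_⟩
  rw [← invTangentCoeff_self (h₁ ^ 2) (h₂ ^ 2) P]
  exact hanti ht ⟨ht.1.trans ht.2, le_rfl⟩ ht.2

theorem one_over_a_decreasing (h₁ h₂ P : ℝ)
    (hh₂ : 0 < h₂) (hh : h₂ < h₁) (hP : 0 < P) :
    (∀ t ∈ Set.Icc (0 : ℝ) P,
        deriv (fun s : ℝ =>
            (gam (h₂^2 * P) - gam (h₂^2 * s)) / ((1 / h₁^2 + s) / (1 / h₂^2 + s)) +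
              gam (h₁^2 * s)) t
          = -((h₁^2 - h₂^2) * h₁^2 * h₂^2 / (h₂^2 + h₁^2 * h₂^2 * t)^2) *
              (gam (h₂^2 * P) - gam (h₂^2 * t)) ∧
        deriv (fun s : ℝ =>
            (gam (h₂^2 * P) - gam (h₂^2 * s)) / ((1 / h₁^2 + s) / (1 / h₂^2 + s)) +
              gam (h₁^2 * s)) t ≤ 0) ∧
    AntitoneOn (fun s : ℝ =>
        (gam (h₂^2 * P) - gam (h₂^2 * s)) / ((1 / h₁^2 + s) / (1 / h₂^2 + s)) +
          gam (h₁^2 * s)) (Set.Icc 0 P) ∧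
    ((gam (h₂^2 * P) - gam (h₂^2 * P)) / ((1 / h₁^2 + P) / (1 / h₂^2 + P)) +
        gam (h₁^2 * P) = gam (h₁^2 * P)) ∧
    (∀ t ∈ Set.Icc (0 : ℝ) P,
      gam (h₁^2 * P) ≤
        (gam (h₂^2 * P) - gam (h₂^2 * t)) / ((1 / h₁^2 + t) / (1 / h₂^2 + t)) +
          gam (h₁^2 * t)) :=
  one_over_a_decreasing_general h₁ h₂ P hh₂ hh
end

section
/- Fix h₁ > h₂ > 0 and P > 0. Let C = (r₁, r₂) be a boundary point of the Gaussian BC capacity region corresponding to some P₁ ∈ (0, P), with tangent line a·r₁ + b·r₂ = 1 at C. Then a·R₁* + b·R₂* > 1, where R₁* = γ(h₁²P) and R₂* = γ(h₂²P); equivalently, w₁(C) = 1 − b·R₂* is strictly less than w₂(C) = a·R₁*. -/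
lemma gam_zero : gam 0 = 0 := by
  simp [gam]

lemma gam_strictMonoOn : StrictMonoOn gam (Set.Ioi (-1)) := by
  intro x hx y hy hxy
  have hlog : Real.logb 2 (1 + x) < Real.logb 2 (1 + y) :=
    Real.logb_lt_logb one_lt_two (by linarith [Set.mem_Ioi.mp hx]) (by linarith)
  unfold gam
  linarith

lemma gam_lt_gam {x y : ℝ} (hx : -1 < x) (hxy : x < y) : gam x < gam y :=
  gam_strictMonoOn hx (hx.trans hxy) hxy

lemma gam_le_gam_s7 {x y : ℝ} (hx : -1 < x) (hxy : x ≤ y) : gam x ≤ gam y :=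
  gam_strictMonoOn.monotoneOn hx (hx.trans_le hxy) hxy

lemma gam_pos {x : ℝ} (hx : 0 < x) : 0 < gam x :=
  gam_zero ▸ gam_lt_gam (by norm_num) hx

lemma gam_nonneg {x : ℝ} (hx : 0 ≤ x) : 0 ≤ gam x :=
  gam_zero ▸ gam_le_gam_s7 (by norm_num) hx

lemma one_lt_tangent_form_of_le_of_lt {g r₁ r₂ R₁ R₂ : ℝ} (hg : 0 ≤ g)
    (hr : 0 < r₂ + g * r₁) (h₁ : r₁ ≤ R₁) (h₂ : r₂ < R₂) :
    1 < g / (r₂ + g * r₁) * R₁ + 1 / (r₂ + g * r₁) * R₂ := by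
  rw [div_mul_eq_mul_div, div_mul_eq_mul_div, ← add_div, one_lt_div hr]
  linarith [mul_le_mul_of_nonneg_left h₁ hg]

theorem corner_point_above_tangent_general (h₁ h₂ P P₁ : ℝ)
    (hh₂ : 0 < h₂) (hP₁ : P₁ ∈ Set.Ioo (0 : ℝ) P) :
    let r₁ := gam (h₁^2 * P₁)
    let r₂ := gam (h₂^2 * P) - gam (h₂^2 * P₁)
    let g := (1 / h₁^2 + P₁) / (1 / h₂^2 + P₁)
    let a := g / (r₂ + g * r₁)
    let b := 1 / (r₂ + g * r₁)
    let R₁s := gam (h₁^2 * P)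
    let R₂s := gam (h₂^2 * P)
    a * R₁s + b * R₂s > 1 ∧ 1 - b * R₂s < a * R₁s := by
  obtain ⟨hP₁, hP₁P⟩ := hP₁
  intro r₁ r₂ g a b R₁s R₂s
  have hg : 0 ≤ g := by positivity
  have hr₁ : 0 ≤ r₁ := gam_nonneg (by positivity)
  have hr₂ : 0 < r₂ :=
    sub_pos.mpr <| gam_lt_gam (neg_one_lt_zero.trans_le (by positivity)) (by gcongr)
  have hR₁ : r₁ ≤ R₁s := gam_le_gam_s7 (neg_one_lt_zero.trans_le (by positivity)) (by gcongr)
  have hR₂ : r₂ < R₂s := sub_lt_self _ (gam_pos (by positivity))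
  have habove : a * R₁s + b * R₂s > 1 :=
    one_lt_tangent_form_of_le_of_lt hg (by positivity) hR₁ hR₂
  exact ⟨habove, by linarith⟩

theorem corner_point_above_tangent (h₁ h₂ P P₁ : ℝ)
    (hh₂ : 0 < h₂) (hh : h₂ < h₁) (hP : 0 < P) (hP₁ : P₁ ∈ Set.Ioo (0 : ℝ) P) :
    let r₁ := gam (h₁^2 * P₁)
    let r₂ := gam (h₂^2 * P) - gam (h₂^2 * P₁)
    let g := (1 / h₁^2 + P₁) / (1 / h₂^2 + P₁)
    let a := g / (r₂ + g * r₁)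
    let b := 1 / (r₂ + g * r₁)
    let R₁s := gam (h₁^2 * P)
    let R₂s := gam (h₂^2 * P)
    a * R₁s + b * R₂s > 1 ∧ 1 - b * R₂s < a * R₁s :=
  corner_point_above_tangent_general h₁ h₂ P P₁ hh₂ hP₁
end
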